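/- arXiv:1712.08818 — 3 statements merged into one kernel-verified Lean document; each statement's English description precedes it below -/
import Mathlib

section
/- Let σ > 0, let v ∈ ℝ² be a fixed point with s = ‖v‖, and let Y be a centered 2D Gaussian vector with per-coordinate variance σ². Then the law of ‖v+Y‖ has density d ↦ (d/σ²)·exp(−(d²+s²)/(2σ²)) · (1/(2π))·∫₀^{2π} exp( d·s·cos θ / σ² ) dθ with respect to Lebesgue measure on (0,∞) (the Rician density, where the integral factor equals the modified Bessel function I₀(ds/σ²)). -/
/-!
The coordinates of `v + Y` are independent Gaussians with means `v 0`, `v 1`, so `v + Y` has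
density `(2πσ²)⁻¹ exp (-‖x - v‖² / (2σ²))` on the plane. The law of the norm of a planar density
is obtained by integrating the density over circles in polar coordinates. Writing
`v = s (cos φ, sin φ)`, on the circle of radius `d` one has `‖x - v‖² = d² + s² - 2 d s cos (θ - φ)`,
and the shift by `φ` disappears from the angular integral by periodicity.
-/

open MeasureTheory ProbabilityTheory Real

/-- `X` is a centered 2D Gaussian vector with per-coordinate variance `σ²`:
its two coordinates are independent real Gaussians with mean `0` and variance `σ²`. -/
def IsCentered2DGaussian {Ω : Type*} [MeasureSpace Ω] (σ : ℝ)
    (X : Ω → EuclideanSpace ℝ (Fin 2)) : Prop :=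
  Measurable X ∧
  (∀ i, Measure.map (fun ω => X ω i) ℙ = gaussianReal 0 ⟨σ ^ 2, sq_nonneg σ⟩) ∧
  IndepFun (fun ω => X ω 0) (fun ω => X ω 1) ℙ

open Set
open scoped ENNReal NNReal

theorem intervalIntegral_comp_mul_cos_add_mul_sin (f : ℝ → ℝ) (a b : ℝ) :
    ∫ θ in (-π)..π, f (a * cos θ + b * sin θ) = ∫ θ in 0..2 * π, f (√(a ^ 2 + b ^ 2) * cos θ) := by
  set z : ℂ := ⟨a, b⟩
  have hz : ‖z‖ = √(a ^ 2 + b ^ 2) := by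
    rw [Complex.norm_def, Complex.normSq_mk, sq, sq]
  have hrot (θ : ℝ) : a * cos θ + b * sin θ = ‖z‖ * cos (θ - z.arg) := by
    have ha : ‖z‖ * cos z.arg = a := Complex.norm_mul_cos_arg z
    have hb : ‖z‖ * sin z.arg = b := Complex.norm_mul_sin_arg z
    rw [cos_sub, ← ha, ← hb]
    ring
  have hper : Function.Periodic (fun θ => f (‖z‖ * cos θ)) (2 * π) := fun θ => by
    simp only [cos_add_two_pi]
  simp_rw [hrot, intervalIntegral.integral_comp_sub_right (fun θ => f (‖z‖ * cos θ)), ← hz]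
  simpa [show π - z.arg = -π - z.arg + 2 * π by ring] using
    hper.intervalIntegral_add_eq (-π - z.arg) 0

theorem setLIntegral_Ioo_ofReal_eq_ofReal_intervalIntegral {f : ℝ → ℝ} (hf : Continuous f)
    (hf_nonneg : ∀ x, 0 ≤ f x) {a b : ℝ} (hab : a ≤ b) :
    ∫⁻ x in Ioo a b, ENNReal.ofReal (f x) = ENNReal.ofReal (∫ x in a..b, f x) := by
  rw [intervalIntegral.integral_of_le hab, integral_Ioc_eq_integral_Ioo,
    ofReal_integral_eq_lintegral_ofReal (hf.integrableOn_Icc.mono_set Ioo_subset_Icc_self)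
      (ae_of_all _ hf_nonneg)]

theorem map_sqrt_sq_add_sq_withDensity (ρ : ℝ × ℝ → ℝ≥0∞) (hρ : Measurable ρ) :
    (volume.withDensity ρ).map (fun p => √(p.1 ^ 2 + p.2 ^ 2))
      = (volume.restrict (Ioi 0)).withDensity
          (fun r => ENNReal.ofReal r * ∫⁻ θ in Ioo (-π) π, ρ (r * cos θ, r * sin θ)) := by
  set N : ℝ × ℝ → ℝ := fun p => √(p.1 ^ 2 + p.2 ^ 2)
  have hN : Measurable N := by fun_prop
  have hN_polar (r θ : ℝ) (hr : 0 < r) : N (r * cos θ, r * sin θ) = r := by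
    simp only [N, mul_pow, ← mul_add, cos_sq_add_sin_sq, mul_one]
    exact sqrt_sq hr.le
  ext A hA
  rw [Measure.map_apply hN hA, withDensity_apply _ (hN hA), withDensity_apply _ hA,
    ← lintegral_indicator (hN hA), ← lintegral_indicator hA, ← lintegral_comp_polarCoord_symm,
    polarCoord_target, Measure.volume_eq_prod, ← Measure.prod_restrict, lintegral_prod]
  · refine lintegral_congr_ae (ae_restrict_of_forall_mem measurableSet_Ioi fun r hr => ?_)
    by_cases hrA : r ∈ A
    · simp [indicator, hN_polar _ _ hr, hrA, lintegral_const_mul' _ _ ENNReal.ofReal_ne_top]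
    · simp [indicator, hN_polar _ _ hr, hrA]
  · exact ((measurable_fst.ennreal_ofReal).smul
      ((hρ.indicator (hN hA)).comp continuous_polarCoord_symm.measurable)).aemeasurable

theorem gaussianReal_prod_gaussianReal (μ₁ μ₂ : ℝ) {v₁ v₂ : ℝ≥0} (hv₁ : v₁ ≠ 0) (hv₂ : v₂ ≠ 0) :
    (gaussianReal μ₁ v₁).prod (gaussianReal μ₂ v₂)
      = volume.withDensity (fun p => gaussianPDF μ₁ v₁ p.1 * gaussianPDF μ₂ v₂ p.2) := by
  rw [gaussianReal_of_var_ne_zero _ hv₁, gaussianReal_of_var_ne_zero _ hv₂,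
    prod_withDensity (measurable_gaussianPDF _ _) (measurable_gaussianPDF _ _),
    Measure.volume_eq_prod]

theorem gaussianPDFReal_mul_gaussianPDFReal_polar (a b : ℝ) (V : ℝ≥0) (r θ : ℝ) :
    gaussianPDFReal a V (r * cos θ) * gaussianPDFReal b V (r * sin θ)
      = (2 * π * V)⁻¹ * exp (-(r ^ 2 + (a ^ 2 + b ^ 2)) / (2 * V))
          * exp ((r * a * cos θ + r * b * sin θ) / V) := by
  have h2πV : √(2 * π * V) * √(2 * π * V) = 2 * π * V := mul_self_sqrt (by positivity)
  simp only [gaussianPDFReal]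
  rw [mul_mul_mul_comm, ← mul_inv, h2πV, ← exp_add, mul_assoc _ (exp _), ← exp_add]
  congr 2
  linear_combination (-(r ^ 2) / (2 * V)) * sin_sq_add_cos_sq θ

theorem setLIntegral_gaussianPDF_mul_gaussianPDF_polar (a b : ℝ) (V : ℝ≥0) {r : ℝ} (hr : 0 ≤ r) :
    ∫⁻ θ in Ioo (-π) π, gaussianPDF a V (r * cos θ) * gaussianPDF b V (r * sin θ)
      = ENNReal.ofReal ((2 * π * V)⁻¹ * exp (-(r ^ 2 + (a ^ 2 + b ^ 2)) / (2 * V))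
          * ∫ θ in 0..2 * π, exp (r * √(a ^ 2 + b ^ 2) * cos θ / V)) := by
  have hC : 0 ≤ (2 * π * V)⁻¹ * exp (-(r ^ 2 + (a ^ 2 + b ^ 2)) / (2 * V)) := by positivity
  have h_angular := intervalIntegral_comp_mul_cos_add_mul_sin (fun x => exp (x / V)) (r * a) (r * b)
  rw [show √((r * a) ^ 2 + (r * b) ^ 2) = r * √(a ^ 2 + b ^ 2) by
    rw [mul_pow, mul_pow, ← mul_add, sqrt_mul (sq_nonneg r), sqrt_sq hr]] at h_angular
  simp only [gaussianPDF, ← ENNReal.ofReal_mul (gaussianPDFReal_nonneg _ _ _),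
    gaussianPDFReal_mul_gaussianPDFReal_polar, ENNReal.ofReal_mul hC]
  rw [lintegral_const_mul' _ _ ENNReal.ofReal_ne_top,
    setLIntegral_Ioo_ofReal_eq_ofReal_intervalIntegral (by fun_prop) (fun _ => (exp_pos _).le)
      (by linarith [pi_pos]), h_angular]

theorem IsCentered2DGaussian.map_const_add_coords {Ω : Type*} [MeasureSpace Ω] {σ : ℝ}
    {Y : Ω → EuclideanSpace ℝ (Fin 2)} (hY : IsCentered2DGaussian σ Y)
    (v : EuclideanSpace ℝ (Fin 2)) :
    Measure.map (fun ω => ((v + Y ω) 0, (v + Y ω) 1)) ℙ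
      = (gaussianReal (v 0) ⟨σ ^ 2, sq_nonneg σ⟩).prod
          (gaussianReal (v 1) ⟨σ ^ 2, sq_nonneg σ⟩) := by
  obtain ⟨hY_meas, hY_law, hY_indep⟩ := hY
  -- typed in `ℝ≥0`: the bare anonymous constructor elaborates as a subtype and blocks instances
  set V : ℝ≥0 := ⟨σ ^ 2, sq_nonneg σ⟩
  have h_law (i : Fin 2) : Measure.map (fun ω => (v + Y ω) i) ℙ = gaussianReal (v i) V := by
    have h_comp : (fun ω => (v + Y ω) i) = (v i + ·) ∘ fun ω => Y ω i := by
      ext; simp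
    rw [h_comp, ← Measure.map_map (measurable_const_add _) (by fun_prop), hY_law,
      gaussianReal_map_const_add, zero_add]
  have h_indep : IndepFun (fun ω => (v + Y ω) 0) (fun ω => (v + Y ω) 1) ℙ :=
    hY_indep.comp (measurable_const_add (v 0)) (measurable_const_add (v 1))
  rw [(indepFun_iff_map_prod_eq_prod_map_map' (by fun_prop) (by fun_prop)
    (by rw [h_law]; infer_instance) (by rw [h_law]; infer_instance)).mp h_indep, h_law, h_law]

theorem norm_shifted_gaussian_rician_density_general
    {Ω : Type*} [MeasureSpace Ω]
    (σ : ℝ) (hσ : 0 < σ)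
    (v : EuclideanSpace ℝ (Fin 2)) (s : ℝ) (hs : s = ‖v‖)
    (Y : Ω → EuclideanSpace ℝ (Fin 2))
    (hY : IsCentered2DGaussian σ Y) :
    Measure.map (fun ω => ‖v + Y ω‖) ℙ
      = (volume.restrict (Set.Ioi (0:ℝ))).withDensity
          (fun d => ENNReal.ofReal
            (d / σ ^ 2 * Real.exp (-(d ^ 2 + s ^ 2) / (2 * σ ^ 2))
              * ((1 / (2 * π)) * ∫ θ in (0:ℝ)..(2 * π),
                  Real.exp (d * s * Real.cos θ / σ ^ 2)))) := by
  set V : ℝ≥0 := ⟨σ ^ 2, sq_nonneg σ⟩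
  have hV : V ≠ 0 := by
    rw [ne_eq, ← NNReal.coe_eq_zero]
    exact pow_ne_zero 2 hσ.ne'
  have hs_coords : s = √(v 0 ^ 2 + v 1 ^ 2) := by
    simp [hs, EuclideanSpace.norm_eq, Fin.sum_univ_two]
  have hs_sq : v 0 ^ 2 + v 1 ^ 2 = s ^ 2 := by rw [hs_coords, sq_sqrt (by positivity)]
  have hV_coe : (V : ℝ) = σ ^ 2 := rfl
  have h_norm : (fun ω => ‖v + Y ω‖)
      = (fun p : ℝ × ℝ => √(p.1 ^ 2 + p.2 ^ 2)) ∘ fun ω => ((v + Y ω) 0, (v + Y ω) 1) := by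
    ext; simp [EuclideanSpace.norm_eq, Fin.sum_univ_two]
  have hY_meas := hY.1
  rw [h_norm, ← Measure.map_map (by fun_prop) (by fun_prop), hY.map_const_add_coords,
    gaussianReal_prod_gaussianReal _ _ hV hV, map_sqrt_sq_add_sq_withDensity _ (by fun_prop)]
  refine withDensity_congr_ae (ae_restrict_of_forall_mem measurableSet_Ioi fun r hr => ?_)
  dsimp only
  rw [setLIntegral_gaussianPDF_mul_gaussianPDF_polar _ _ _ hr.le, ← hs_coords, hs_sq, hV_coe,
    ← ENNReal.ofReal_mul hr.le]
  congr 1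
  field_simp

theorem norm_shifted_gaussian_rician_density
    {Ω : Type*} [MeasureSpace Ω] [IsProbabilityMeasure (ℙ : Measure Ω)]
    (σ : ℝ) (hσ : 0 < σ)
    (v : EuclideanSpace ℝ (Fin 2)) (s : ℝ) (hs : s = ‖v‖)
    (Y : Ω → EuclideanSpace ℝ (Fin 2))
    (hY : IsCentered2DGaussian σ Y) :
    Measure.map (fun ω => ‖v + Y ω‖) ℙ
      = (volume.restrict (Set.Ioi (0:ℝ))).withDensity
          (fun d => ENNReal.ofReal
            (d / σ ^ 2 * Real.exp (-(d ^ 2 + s ^ 2) / (2 * σ ^ 2))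
              * ((1 / (2 * π)) * ∫ θ in (0:ℝ)..(2 * π),
                  Real.exp (d * s * Real.cos θ / σ ^ 2)))) :=
  norm_shifted_gaussian_rician_density_general σ hσ v s hs Y hY
end

section
/- Let n be a natural number, σ > 0, s_r ≥ 0, P ∈ [0,1], P_t > 0, α > 0, and s ≥ 0. Let V₁,…,Vₙ be i.i.d. positive random variables with density f(v) = (v/σ²)·exp(−(v²+s_r²)/(2σ²)) · (1/(2π))·∫₀^{2π} exp( v·s_r·cos θ / σ² ) dθ on (0,∞); let h₁,…,hₙ be i.i.d. Exp(1) random variables; let B₁,…,Bₙ be i.i.d. Bernoulli random variables with success probability P; and suppose all of these random variables are mutually independent. Then E[exp(−s·Σ_{k=1}^{n} Bₖ·P_t·hₖ·Vₖ^{−α})] = ( P·∫₀^{∞} (1/(1 + s·P_t·v^{−α}))·f(v) dv + 1 − P )^n. -/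
open MeasureTheory ProbabilityTheory Real

/-!
The exponential of the sum is a product over devices, and the triples `(Bₖ, hₖ, Vₖ)` are
independent across `k`, so the expectation factorises into `n` identical factors. In one
factor, `Bₖ ∈ {0, 1}` a.s. and is independent of the rest, which gives
`P · E[e^{-s Pt hₖ Vₖ^{-α}}] + 1 - P`. Averaging out the Exp(1) fading first,
`E[e^{-y hₖ}] = 1 / (1 + y)` for `y ≥ 0`, and what is left is the integral of
`1 / (1 + s Pt v^{-α})` against the density `f` of `Vₖ`.
-/

noncomputable def ricianPDF (σ ν v : ℝ) : ℝ :=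
  v / σ ^ 2 * exp (-(v ^ 2 + ν ^ 2) / (2 * σ ^ 2))
    * ((1 / (2 * π)) * ∫ θ in (0:ℝ)..(2 * π), exp (v * ν * cos θ / σ ^ 2))

lemma continuous_ricianPDF (σ ν : ℝ) : Continuous (ricianPDF σ ν) := by
  unfold ricianPDF
  fun_prop

lemma ricianPDF_nonneg (σ ν : ℝ) {v : ℝ} (hv : 0 ≤ v) : 0 ≤ ricianPDF σ ν v := by
  unfold ricianPDF
  have hint : 0 ≤ ∫ θ in (0:ℝ)..(2 * π), exp (v * ν * cos θ / σ ^ 2) :=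
    intervalIntegral.integral_nonneg (by positivity) fun θ _ => (exp_pos _).le
  positivity

lemma integral_exp_neg_mul_expMeasure {r c : ℝ} (hr : 0 ≤ r) (hrc : 0 < r + c) :
    ∫ x, exp (-(c * x)) ∂expMeasure r = r / (r + c) := by
  have hdens : ∀ x, (exponentialPDF r x).toReal • exp (-(c * x))
      = Set.indicator (Set.Ici 0) (fun x => r * exp (-(r + c) * x)) x := by
    intro x
    by_cases hx : 0 ≤ x
    · rw [exponentialPDF_of_nonneg hx, Set.indicator_of_mem (Set.mem_Ici.2 hx), smul_eq_mul,
        ENNReal.toReal_ofReal (by positivity), mul_assoc, ← exp_add]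
      ring_nf
    · rw [exponentialPDF_of_neg (not_le.1 hx), Set.indicator_of_notMem (by simpa using hx)]
      simp
  change ∫ x, exp (-(c * x)) ∂volume.withDensity (exponentialPDF r) = _
  rw [integral_withDensity_eq_integral_toReal_smul (f := exponentialPDF r)
      (measurable_exponentialPDFReal r).ennreal_ofReal
      (ae_of_all _ fun _ => ENNReal.ofReal_lt_top)]
  simp_rw [hdens]
  rw [integral_indicator measurableSet_Ici, integral_Ici_eq_integral_Ioi, integral_const_mul,
    integral_exp_mul_Ioi (by linarith)]
  field_simp
  simp

lemma ae_nonneg_expMeasure (r : ℝ) : ∀ᵐ x ∂expMeasure r, 0 ≤ x := by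
  simp only [ae_iff, not_le]
  change volume.withDensity (exponentialPDF r) (Set.Iio 0) = 0
  rw [withDensity_apply _ measurableSet_Iio]
  exact lintegral_exponentialPDF_of_nonpos le_rfl

lemma integral_withDensity_ofReal {α : Type*} [MeasurableSpace α] {μ : Measure α} {f : α → ℝ}
    (hf : Measurable f) (hf0 : 0 ≤ᵐ[μ] f) (g : α → ℝ) :
    ∫ x, g x ∂μ.withDensity (fun x => ENNReal.ofReal (f x)) = ∫ x, g x * f x ∂μ := by
  rw [integral_withDensity_eq_integral_toReal_smul hf.ennreal_ofReal
    (ae_of_all _ fun _ => ENNReal.ofReal_lt_top)]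
  refine integral_congr_ae ?_
  filter_upwards [hf0] with x hx
  rw [ENNReal.toReal_ofReal hx, smul_eq_mul, mul_comm]

section Independence

variable {Ω : Type*} {mΩ : MeasurableSpace Ω} {μ : Measure Ω}

lemma ProbabilityTheory.iIndepFun.curry {ι κ β : Type*} {mβ : MeasurableSpace β}
    {X : ι × κ → Ω → β} (mX : ∀ p, Measurable (X p)) (h : iIndepFun X μ) :
    iIndepFun (fun i ω j => X (i, j) ω) μ := by
  have := h.isProbabilityMeasure
  have hmarg : ∀ p, IsProbabilityMeasure (μ.map (X p)) :=
    fun p => Measure.isProbabilityMeasure_map (mX p).aemeasurable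
  have hrow : ∀ i, μ.map (fun ω j => X (i, j) ω) = Measure.infinitePi fun j => μ.map (X (i, j)) :=
    fun i => (h.precomp (Prod.mk_right_injective i)).map_fun_eq_infinitePi_map fun j => mX (i, j)
  rw [iIndepFun_iff_map_fun_eq_infinitePi_map (fun i => by fun_prop)]
  simp_rw [hrow]
  rw [← Measure.infinitePi_map_curry (fun i j => μ.map (X (i, j))) (hμ := fun i j => hmarg (i, j)),
    ← h.map_fun_eq_infinitePi_map mX, Measure.map_map (by fun_prop) (by fun_prop)]
  rfl

variable [IsProbabilityMeasure μ]

lemma integral_exp_neg_mul_of_indepFun_expMeasure {Y E : Ω → ℝ} {r : ℝ} (hr : 0 < r)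
    (hY : Measurable Y) (hE : Measurable E) (hY0 : 0 ≤ᵐ[μ] Y) (hEr : μ.map E = expMeasure r)
    (hind : IndepFun Y E μ) :
    ∫ ω, exp (-(Y ω * E ω)) ∂μ = ∫ ω, r / (r + Y ω) ∂μ := by
  have := isProbabilityMeasure_expMeasure hr
  have hjoint : μ.map (fun ω => (Y ω, E ω)) = (μ.map Y).prod (expMeasure r) := by
    rw [← hEr]
    exact (indepFun_iff_map_prod_eq_prod_map_map hY.aemeasurable hE.aemeasurable).1 hind
  have hY0' : ∀ᵐ y ∂μ.map Y, 0 ≤ y :=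
    (ae_map_iff hY.aemeasurable (measurableSet_le measurable_const measurable_id)).2 hY0
  have hbound : ∀ᵐ p ∂(μ.map Y).prod (expMeasure r), ‖exp (-(p.1 * p.2))‖ ≤ 1 := by
    filter_upwards [Measure.quasiMeasurePreserving_fst.ae hY0',
      Measure.quasiMeasurePreserving_snd.ae (ae_nonneg_expMeasure r)] with p hy hx
    rw [norm_of_nonneg (exp_nonneg _), exp_le_one_iff, neg_nonpos]
    exact mul_nonneg hy hx
  have hint : Integrable (fun p : ℝ × ℝ => exp (-(p.1 * p.2))) ((μ.map Y).prod (expMeasure r)) :=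
    (integrable_const 1).mono' (by fun_prop) hbound
  calc ∫ ω, exp (-(Y ω * E ω)) ∂μ
      = ∫ p, exp (-(p.1 * p.2)) ∂(μ.map Y).prod (expMeasure r) := by
        rw [← hjoint, integral_map (by fun_prop) (by fun_prop)]
    _ = ∫ y, ∫ x, exp (-(y * x)) ∂expMeasure r ∂μ.map Y := integral_prod _ hint
    _ = ∫ y, r / (r + y) ∂μ.map Y := by
        refine integral_congr_ae ?_
        filter_upwards [hY0'] with y hy
        exact integral_exp_neg_mul_expMeasure hr.le (by positivity)
    _ = ∫ ω, r / (r + Y ω) ∂μ := integral_map hY.aemeasurable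
          (measurable_const.div (measurable_const.add measurable_id)).aestronglyMeasurable

lemma integral_comp_mul_of_indepFun_bernoulli {B X : Ω → ℝ} {P : ℝ} (hP : 0 ≤ P)
    (hB : Measurable B) (hX : Measurable X)
    (hBP : μ.map B = ENNReal.ofReal P • Measure.dirac 1 + ENNReal.ofReal (1 - P) • Measure.dirac 0)
    (hind : IndepFun B X μ) {φ : ℝ → ℝ} (hφ : Measurable φ)
    (hφX : Integrable (fun ω => φ (X ω)) μ) :
    ∫ ω, φ (B ω * X ω) ∂μ = P * ∫ ω, φ (X ω) ∂μ + (1 - P) * φ 0 := by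
  have hB01 : ∀ᵐ ω ∂μ, B ω = 0 ∨ B ω = 1 := by
    have hmeas : MeasurableSet {x : ℝ | x = 0 ∨ x = 1} :=
      (measurableSet_singleton 0).union (measurableSet_singleton 1)
    refine ae_of_ae_map (p := fun x => x = 0 ∨ x = 1) hB.aemeasurable ?_
    rw [hBP, ae_add_measure_iff]
    exact ⟨Measure.ae_smul_measure ((ae_dirac_iff hmeas).2 (Or.inr rfl)) _,
      Measure.ae_smul_measure ((ae_dirac_iff hmeas).2 (Or.inl rfl)) _⟩
  have hBint : Integrable B μ := by
    refine Integrable.mono' (integrable_const 1) hB.aestronglyMeasurable ?_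
    filter_upwards [hB01] with ω hω
    rcases hω with h | h <;> simp [h]
  have hEB : ∫ ω, B ω ∂μ = P := by
    change ∫ ω, id (B ω) ∂μ = P
    rw [← integral_map hB.aemeasurable aestronglyMeasurable_id, hBP,
      integral_add_measure ((integrable_dirac (by simp)).smul_measure ENNReal.ofReal_ne_top)
        ((integrable_dirac (by simp)).smul_measure ENNReal.ofReal_ne_top),
      integral_smul_measure, integral_smul_measure, integral_dirac, integral_dirac]
    simp [ENNReal.toReal_ofReal hP]
  have hsplit : (fun ω => φ (B ω * X ω)) =ᵐ[μ] fun ω => B ω * φ (X ω) + (1 - B ω) * φ 0 := by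
    filter_upwards [hB01] with ω hω
    rcases hω with h | h <;> simp [h]
  have hindφ : IndepFun B (fun ω => φ (X ω)) μ := hind.comp measurable_id hφ
  have hBφint : Integrable (fun ω => B ω * φ (X ω)) μ := hindφ.integrable_mul hBint hφX
  have h1Bint : Integrable (fun ω => (1 - B ω) * φ 0) μ :=
    ((integrable_const 1).sub hBint).mul_const _
  rw [integral_congr_ae hsplit, integral_add hBφint h1Bint, integral_mul_const,
    integral_sub (integrable_const 1) hBint, hindφ.integral_fun_mul_eq_mul_integral
      hB.aestronglyMeasurable (hφ.comp hX).aestronglyMeasurable, hEB]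
  simp

lemma integral_exp_neg_interferer_power {B h V : Ω → ℝ} {f : ℝ → ℝ} {P Pt α s : ℝ}
    (hP : 0 ≤ P) (hPt : 0 ≤ Pt) (hs : 0 ≤ s)
    (hfm : Measurable f) (hf0 : ∀ v ∈ Set.Ioi (0:ℝ), 0 ≤ f v)
    (hBm : Measurable B) (hhm : Measurable h) (hVm : Measurable V)
    (hB : μ.map B = ENNReal.ofReal P • Measure.dirac 1 + ENNReal.ofReal (1 - P) • Measure.dirac 0)
    (hh : μ.map h = expMeasure 1)
    (hV : μ.map V = (volume.restrict (Set.Ioi 0)).withDensity fun v => ENNReal.ofReal (f v))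
    (hind : iIndepFun ![B, h, V] μ) :
    ∫ ω, exp (-(s * (B ω * Pt * h ω * V ω ^ (-α)))) ∂μ
      = P * (∫ v in Set.Ioi 0, (1 / (1 + s * Pt * v ^ (-α))) * f v) + 1 - P := by
  have hm : ∀ i, Measurable (![B, h, V] i) := fun i => by fin_cases i <;> assumption
  have hV0 : ∀ᵐ ω ∂μ, 0 < V ω := by
    refine ae_of_ae_map (p := fun v => 0 < v) hVm.aemeasurable ?_
    rw [hV]
    exact (withDensity_absolutelyContinuous _ _).ae_le (ae_restrict_mem measurableSet_Ioi)
  have hh0 : ∀ᵐ ω ∂μ, 0 ≤ h ω :=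
    ae_of_ae_map (p := fun x => 0 ≤ x) hhm.aemeasurable (hh ▸ ae_nonneg_expMeasure 1)
  set X : Ω → ℝ := fun ω => Pt * h ω * V ω ^ (-α) with hX
  have hXm : Measurable X := by fun_prop
  have hX0 : ∀ᵐ ω ∂μ, 0 ≤ X ω := by
    filter_upwards [hh0, hV0] with ω hω hω'
    positivity
  have hBX : IndepFun B X μ :=
    (hind.indepFun_prodMk hm 1 2 0 (by decide) (by decide)).symm.comp measurable_id
      (by fun_prop : Measurable fun p : ℝ × ℝ => Pt * p.1 * p.2 ^ (-α))
  have hVh : IndepFun (fun ω => s * Pt * V ω ^ (-α)) h μ :=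
    (hind.indepFun (show (2 : Fin 3) ≠ 1 by decide)).comp
      (by fun_prop : Measurable fun v : ℝ => s * Pt * v ^ (-α)) measurable_id
  have hφX : Integrable (fun ω => exp (-(s * X ω))) μ := by
    refine (integrable_const 1).mono' (by fun_prop) ?_
    filter_upwards [hX0] with ω hω
    rw [norm_of_nonneg (exp_nonneg _), exp_le_one_iff, neg_nonpos]
    positivity
  calc ∫ ω, exp (-(s * (B ω * Pt * h ω * V ω ^ (-α)))) ∂μ
      = ∫ ω, exp (-(s * (B ω * X ω))) ∂μ := by simp only [hX, mul_assoc]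
    _ = P * ∫ ω, exp (-(s * X ω)) ∂μ + (1 - P) * exp (-(s * 0)) :=
        integral_comp_mul_of_indepFun_bernoulli hP hBm hXm hB hBX
          (φ := fun x => exp (-(s * x))) (by fun_prop) hφX
    _ = P * ∫ ω, exp (-(s * Pt * V ω ^ (-α) * h ω)) ∂μ + (1 - P) := by
        simp only [hX, mul_zero, neg_zero, exp_zero, mul_one]
        congr 3 with ω
        ring_nf
    _ = P * ∫ ω, 1 / (1 + s * Pt * V ω ^ (-α)) ∂μ + (1 - P) := by
        rw [integral_exp_neg_mul_of_indepFun_expMeasure one_pos (by fun_prop) hhm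
          (by filter_upwards [hV0] with ω hω; positivity) hh hVh]
    _ = _ := by
        rw [← integral_map hVm.aemeasurable (f := fun v => 1 / (1 + s * Pt * v ^ (-α)))
          (measurable_const.div (by fun_prop)).aestronglyMeasurable, hV,
          integral_withDensity_ofReal hfm
            ((ae_restrict_iff' measurableSet_Ioi).2 (ae_of_all _ hf0))]
        ring

end Independence

theorem chain_intra_cluster_interference_laplace_general
    {Ω : Type*} [MeasureSpace Ω] [IsProbabilityMeasure (ℙ : Measure Ω)]
    (n : ℕ) (σ s_r P Pt α s : ℝ)
    (hP₀ : 0 ≤ P) (hPt : 0 < Pt) (hs : 0 ≤ s)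
    -- the Rician density with parameters (s_r, σ²)
    (f : ℝ → ℝ)
    (hf : f = fun v => v / σ ^ 2 * Real.exp (-(v ^ 2 + s_r ^ 2) / (2 * σ ^ 2))
      * ((1 / (2 * π)) * ∫ θ in (0:ℝ)..(2 * π), Real.exp (v * s_r * Real.cos θ / σ ^ 2)))
    (V h B : Fin n → Ω → ℝ)
    (hVm : ∀ k, Measurable (V k)) (hhm : ∀ k, Measurable (h k))
    (hBm : ∀ k, Measurable (B k))
    -- each Vₖ has density f on (0, ∞)
    (hV : ∀ k, Measure.map (V k) ℙ
      = (volume.restrict (Set.Ioi (0:ℝ))).withDensity (fun v => ENNReal.ofReal (f v)))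
    -- each hₖ is Exp(1)
    (hh : ∀ k, Measure.map (h k) ℙ = expMeasure 1)
    -- each Bₖ is Bernoulli with success probability P
    (hB : ∀ k, Measure.map (B k) ℙ
      = ENNReal.ofReal P • Measure.dirac (1:ℝ)
        + ENNReal.ofReal (1 - P) • Measure.dirac (0:ℝ))
    -- all 3n random variables are mutually independent
    (hindep : iIndepFun
        (fun p : Fin n × Fin 3 => ![B p.1, h p.1, V p.1] p.2) ℙ) :
    (∫ ω, Real.exp (-(s * ∑ k : Fin n, B k ω * Pt * h k ω * (V k ω) ^ (-α))) ∂ℙ)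
      = (P * (∫ v in Set.Ioi (0:ℝ), (1 / (1 + s * Pt * v ^ (-α))) * f v) + 1 - P) ^ n := by
  have hfm : Measurable f := by
    rw [hf]
    exact (continuous_ricianPDF σ s_r).measurable
  have hf0 : ∀ v ∈ Set.Ioi (0:ℝ), 0 ≤ f v := by
    rw [hf]
    exact fun v hv => ricianPDF_nonneg σ s_r hv.le
  have hm : ∀ p : Fin n × Fin 3, Measurable (![B p.1, h p.1, V p.1] p.2) := by
    rintro ⟨k, j⟩
    fin_cases j
    exacts [hBm k, hhm k, hVm k]
  calc ∫ ω, exp (-(s * ∑ k, B k ω * Pt * h k ω * V k ω ^ (-α))) ∂ℙ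
      = ∫ ω, ∏ k, exp (-(s * (B k ω * Pt * h k ω * V k ω ^ (-α)))) ∂ℙ := by
        simp_rw [Finset.mul_sum, ← Finset.sum_neg_distrib, exp_sum]
    _ = ∏ k, ∫ ω, exp (-(s * (B k ω * Pt * h k ω * V k ω ^ (-α)))) ∂ℙ :=
        (hindep.curry hm).integral_fun_prod_comp
          (f := fun _ x => exp (-(s * (x 0 * Pt * x 1 * x 2 ^ (-α)))))
          (fun k => by fun_prop) (fun k => by fun_prop)
    _ = _ := by
        rw [Finset.prod_congr rfl fun k _ => integral_exp_neg_interferer_power hP₀ hPt.le hs hfm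
          hf0 (hBm k) (hhm k) (hVm k) (hB k) (hh k) (hV k)
          (hindep.precomp (g := Prod.mk k) (Prod.mk_right_injective k)),
          Finset.prod_const, Finset.card_univ, Fintype.card_fin]

theorem chain_intra_cluster_interference_laplace
    {Ω : Type*} [MeasureSpace Ω] [IsProbabilityMeasure (ℙ : Measure Ω)]
    (n : ℕ) (σ s_r P Pt α s : ℝ)
    (hσ : 0 < σ) (hsr : 0 ≤ s_r) (hP₀ : 0 ≤ P) (hP₁ : P ≤ 1)
    (hPt : 0 < Pt) (hα : 0 < α) (hs : 0 ≤ s)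
    -- the Rician density with parameters (s_r, σ²)
    (f : ℝ → ℝ)
    (hf : f = fun v => v / σ ^ 2 * Real.exp (-(v ^ 2 + s_r ^ 2) / (2 * σ ^ 2))
      * ((1 / (2 * π)) * ∫ θ in (0:ℝ)..(2 * π), Real.exp (v * s_r * Real.cos θ / σ ^ 2)))
    (V h B : Fin n → Ω → ℝ)
    (hVm : ∀ k, Measurable (V k)) (hhm : ∀ k, Measurable (h k))
    (hBm : ∀ k, Measurable (B k))
    -- each Vₖ has density f on (0, ∞)
    (hV : ∀ k, Measure.map (V k) ℙ
      = (volume.restrict (Set.Ioi (0:ℝ))).withDensity (fun v => ENNReal.ofReal (f v)))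
    -- each hₖ is Exp(1)
    (hh : ∀ k, Measure.map (h k) ℙ = expMeasure 1)
    -- each Bₖ is Bernoulli with success probability P
    (hB : ∀ k, Measure.map (B k) ℙ
      = ENNReal.ofReal P • Measure.dirac (1:ℝ)
        + ENNReal.ofReal (1 - P) • Measure.dirac (0:ℝ))
    -- all 3n random variables are mutually independent
    (hindep : iIndepFun
        (fun p : Fin n × Fin 3 => ![B p.1, h p.1, V p.1] p.2) ℙ) :
    (∫ ω, Real.exp (-(s * ∑ k : Fin n, B k ω * Pt * h k ω * (V k ω) ^ (-α))) ∂ℙ)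
      = (P * (∫ v in Set.Ioi (0:ℝ), (1 / (1 + s * Pt * v ^ (-α))) * f v) + 1 - P) ^ n :=
  chain_intra_cluster_interference_laplace_general n σ s_r P Pt α s hP₀ hPt hs f hf V h B hVm hhm
    hBm hV hh hB hindep
end

section
/- Let L > 0. For every z ≥ 0, the Lebesgue area of the set { x ∈ [−L,L]² : ‖x‖ ≤ z } equals: π·z² if 0 ≤ z ≤ L; π·z² − 4·( z²·arccos(L/z) − L·√(z² − L²) ) if L ≤ z ≤ √2·L; and 4L² if z ≥ √2·L. Consequently, if Z is uniformly distributed on the square [−L,L]², then P(‖Z‖ ≤ z) equals this area divided by 4L². -/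
/-!
Intersect the disk of radius `z` with the square `[-L, L]²`. For `z ≤ L` the disk lies inside the
square and for `z ≥ √2 L` the square lies inside the disk. In between, the disk minus the square is
the union of four congruent circular caps, one of them `{x > L, x² + y² ≤ z²}`; they are pairwise
disjoint because the corners of the square lie outside the disk. By Fubini each cap has area
`∫_L^z 2√(z² - x²) dx`, which the antiderivative `x √(z² - x²) + z² arcsin (x / z)` evaluates to
`z² arccos (L / z) - L √(z² - L²)`.
-/

open MeasureTheory ProbabilityTheory Real Set

lemma volume_setOf_sq_le (c : ℝ) : volume {y : ℝ | y ^ 2 ≤ c} = ENNReal.ofReal (2 * √c) := by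
  rcases le_or_gt 0 c with hc | hc
  · have : {y : ℝ | y ^ 2 ≤ c} = Icc (-√c) √c := by
      ext y
      exact sq_le hc
    rw [this, Real.volume_Icc]
    ring_nf
  · have : {y : ℝ | y ^ 2 ≤ c} = ∅ :=
      eq_empty_of_forall_notMem fun y hy => (hc.trans_le (sq_nonneg y)).not_ge hy
    rw [this, measure_empty, sqrt_eq_zero_of_nonpos hc.le, mul_zero, ENNReal.ofReal_zero]

lemma hasDerivAt_mul_sqrt_add_mul_arcsin {r x : ℝ} (hx : x ∈ Ioo (-r) r) :
    HasDerivAt (fun x => x * √(r ^ 2 - x ^ 2) + r ^ 2 * arcsin (x / r))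
      (2 * √(r ^ 2 - x ^ 2)) x := by
  obtain ⟨hrx, hxr⟩ := hx
  have hr : 0 < r := by linarith
  have hpos : 0 < r ^ 2 - x ^ 2 := by nlinarith
  have hsq : √(r ^ 2 - x ^ 2) ^ 2 = r ^ 2 - x ^ 2 := sq_sqrt hpos.le
  have hsqrt : HasDerivAt (fun x => √(r ^ 2 - x ^ 2)) (-(2 * x) / (2 * √(r ^ 2 - x ^ 2))) x := by
    simpa using ((hasDerivAt_pow 2 x).const_sub (r ^ 2)).sqrt hpos.ne'
  have harcsin : HasDerivAt (fun x => arcsin (x / r)) (1 / √(1 - (x / r) ^ 2) * (1 / r)) x :=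
    (hasDerivAt_arcsin (by rw [ne_eq, div_eq_iff hr.ne']; linarith)
      (by rw [ne_eq, div_eq_iff hr.ne']; linarith)).comp x ((hasDerivAt_id x).div_const r)
  have hnorm : √(1 - (x / r) ^ 2) = √(r ^ 2 - x ^ 2) / r := by
    rw [show 1 - (x / r) ^ 2 = (r ^ 2 - x ^ 2) / r ^ 2 by field_simp, sqrt_div hpos.le,
      sqrt_sq hr.le]
  refine (((hasDerivAt_id x).mul hsqrt).add (harcsin.const_mul (r ^ 2))).congr_deriv ?_
  rw [hnorm, id_eq]
  field_simp
  linear_combination -hsq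

lemma integral_two_mul_sqrt_sq_sub_sq {r a : ℝ} (hr : 0 < r) (ha : -r ≤ a) (har : a ≤ r) :
    ∫ x in a..r, 2 * √(r ^ 2 - x ^ 2) = r ^ 2 * arccos (a / r) - a * √(r ^ 2 - a ^ 2) := by
  rw [intervalIntegral.integral_eq_sub_of_hasDerivAt_of_le har (by fun_prop)
    (fun x hx => hasDerivAt_mul_sqrt_add_mul_arcsin ⟨ha.trans_lt hx.1, hx.2⟩)
    (Continuous.intervalIntegrable (by fun_prop) _ _)]
  simp only [div_self hr.ne', arcsin_one, sub_self, sqrt_zero, mul_zero, zero_add,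
    arccos_eq_pi_div_two_sub_arcsin]
  ring

namespace SquareDisk

def disk (r : ℝ) : Set (ℝ × ℝ) := {p | p.1 ^ 2 + p.2 ^ 2 ≤ r ^ 2}

def square (L : ℝ) : Set (ℝ × ℝ) := {p | |p.1| ≤ L ∧ |p.2| ≤ L}

def cap (a r : ℝ) : Set (ℝ × ℝ) := {p | a < p.1} ∩ disk r

lemma measurableSet_disk (r : ℝ) : MeasurableSet (disk r) :=
  measurableSet_le (by fun_prop) measurable_const

lemma measurableSet_square (L : ℝ) : MeasurableSet (square L) :=
  (measurableSet_le measurable_fst.abs measurable_const).inter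
    (measurableSet_le measurable_snd.abs measurable_const)

lemma measurableSet_cap (a r : ℝ) : MeasurableSet (cap a r) :=
  (measurableSet_lt measurable_const measurable_fst).inter (measurableSet_disk r)

lemma volume_square {L : ℝ} (hL : 0 ≤ L) : volume (square L) = ENNReal.ofReal (4 * L ^ 2) := by
  have : square L = Icc (-L) L ×ˢ Icc (-L) L := by
    ext p
    simp only [square, mem_ofPred_eq, mem_prod, mem_Icc, abs_le]
  rw [this, Measure.volume_eq_prod, Measure.prod_prod, Real.volume_Icc,
    ← ENNReal.ofReal_mul (by linarith)]
  ring_nf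

lemma volume_cap {a r : ℝ} (hr : 0 ≤ r) (har : a ≤ r) :
    volume (cap a r) = ENNReal.ofReal (∫ x in a..r, 2 * √(r ^ 2 - x ^ 2)) := by
  have hslice : ∀ x, volume (Prod.mk x ⁻¹' cap a r)
      = (Ioc a r).indicator (fun x => ENNReal.ofReal (2 * √(r ^ 2 - x ^ 2))) x := by
    intro x
    by_cases hax : a < x
    · have hpre : Prod.mk x ⁻¹' cap a r = {y | y ^ 2 ≤ r ^ 2 - x ^ 2} := by
        ext y
        simp only [cap, disk, mem_preimage, mem_inter_iff, mem_ofPred_eq, hax, true_and]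
        constructor <;> intro <;> linarith
      rw [hpre, volume_setOf_sq_le]
      -- beyond `x = r` the slice is empty, matching `√` of a negative number being `0`
      by_cases hxr : x ≤ r
      · rw [indicator_of_mem (mem_Ioc.2 ⟨hax, hxr⟩)]
      · rw [indicator_of_notMem fun h => hxr h.2,
          sqrt_eq_zero_of_nonpos (by nlinarith), mul_zero, ENNReal.ofReal_zero]
    · have hpre : Prod.mk x ⁻¹' cap a r = ∅ :=
        eq_empty_of_forall_notMem fun y hy => hax hy.1
      rw [hpre, measure_empty, indicator_of_notMem fun h => hax h.1]
  rw [Measure.volume_eq_prod, Measure.prod_apply (measurableSet_cap a r)]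
  simp_rw [hslice]
  rw [lintegral_indicator measurableSet_Ioc, intervalIntegral.integral_of_le har,
    ofReal_integral_eq_lintegral_ofReal (Continuous.integrableOn_Ioc (by fun_prop))
      (ae_of_all _ fun x => by positivity)]

lemma volume_abs_fst_gt_inter_disk {L r : ℝ} (hL : 0 ≤ L) (hLr : L ≤ r) :
    volume ({p : ℝ × ℝ | L < |p.1|} ∩ disk r)
      = 2 * ENNReal.ofReal (∫ x in L..r, 2 * √(r ^ 2 - x ^ 2)) := by
  have hneg : MeasurePreserving (Prod.map Neg.neg id : ℝ × ℝ → ℝ × ℝ) := by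
    rw [Measure.volume_eq_prod]
    exact (Measure.measurePreserving_neg volume).prod (MeasurePreserving.id volume)
  have hsplit :
      {p : ℝ × ℝ | L < |p.1|} ∩ disk r = cap L r ∪ Prod.map Neg.neg id ⁻¹' cap L r := by
    ext p
    simp only [cap, disk, lt_abs, mem_inter_iff, mem_union, mem_preimage, mem_ofPred_eq,
      Prod.map_fst, Prod.map_snd, id_eq, neg_sq]
    tauto
  have hdisj : Disjoint (cap L r) (Prod.map Neg.neg id ⁻¹' cap L r) :=
    disjoint_left.2 fun p hp hp' => by
      simp only [cap, mem_inter_iff, mem_preimage, mem_ofPred_eq, Prod.map_fst] at hp hp'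
      linarith [hp.1, hp'.1]
  rw [hsplit, measure_union hdisj ((measurableSet_cap L r).preimage hneg.measurable),
    hneg.measure_preimage (measurableSet_cap L r).nullMeasurableSet,
    volume_cap (hL.trans hLr) hLr, two_mul]

lemma volume_disk_diff_square {L r : ℝ} (hL : 0 ≤ L) (hLr : L ≤ r) (hr : r ≤ √2 * L) :
    volume (disk r \ square L) = 4 * ENNReal.ofReal (∫ x in L..r, 2 * √(r ^ 2 - x ^ 2)) := by
  set caps := {p : ℝ × ℝ | L < |p.1|} ∩ disk r
  have hcaps : MeasurableSet caps :=
    (measurableSet_lt measurable_const measurable_fst.abs).inter (measurableSet_disk r)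
  have hswap : MeasurePreserving (Prod.swap : ℝ × ℝ → ℝ × ℝ) := by
    rw [Measure.volume_eq_prod]
    exact Measure.measurePreserving_swap
  have hsplit : disk r \ square L = caps ∪ Prod.swap ⁻¹' caps := by
    ext p
    simp only [caps, disk, square, mem_sdiff, mem_inter_iff, mem_union, mem_preimage,
      mem_ofPred_eq, Prod.fst_swap, Prod.snd_swap, not_and_or, not_le, add_comm (p.2 ^ 2)]
    tauto
  have hr2 : r ^ 2 ≤ 2 * L ^ 2 := by
    simpa [mul_pow] using pow_le_pow_left₀ (hL.trans hLr) hr 2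
  have hdisj : Disjoint caps (Prod.swap ⁻¹' caps) :=
    disjoint_left.2 fun p hp hp' => by
      simp only [caps, disk, mem_inter_iff, mem_preimage, mem_ofPred_eq, Prod.fst_swap] at hp hp'
      have h1 : L ^ 2 < p.1 ^ 2 := by simpa [sq_abs] using pow_lt_pow_left₀ hp.1 hL two_ne_zero
      have h2 : L ^ 2 < p.2 ^ 2 := by simpa [sq_abs] using pow_lt_pow_left₀ hp'.1 hL two_ne_zero
      linarith [hp.2]
  rw [hsplit, measure_union hdisj (hcaps.preimage hswap.measurable),
    hswap.measure_preimage hcaps.nullMeasurableSet, volume_abs_fst_gt_inter_disk hL hLr]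
  ring

lemma square_inter_disk_of_le {L r : ℝ} (hr : 0 ≤ r) (hrL : r ≤ L) :
    square L ∩ disk r = disk r := by
  refine inter_eq_right.2 fun p hp => ?_
  have hr2 : r ^ 2 ≤ L ^ 2 := pow_le_pow_left₀ hr hrL 2
  exact ⟨abs_le_of_sq_le_sq (by nlinarith [hp.out, sq_nonneg p.2]) (hr.trans hrL),
    abs_le_of_sq_le_sq (by nlinarith [hp.out, sq_nonneg p.1]) (hr.trans hrL)⟩

lemma square_inter_disk_of_sqrt_two_mul_le {L r : ℝ} (hL : 0 ≤ L) (hr : √2 * L ≤ r) :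
    square L ∩ disk r = square L := by
  refine inter_eq_left.2 fun p ⟨h1, h2⟩ => ?_
  have hr2 : 2 * L ^ 2 ≤ r ^ 2 := by
    simpa [mul_pow] using pow_le_pow_left₀ (by positivity) hr 2
  have h1' : p.1 ^ 2 ≤ L ^ 2 := sq_le_sq' (abs_le.1 h1).1 (abs_le.1 h1).2
  have h2' : p.2 ^ 2 ≤ L ^ 2 := sq_le_sq' (abs_le.1 h2).1 (abs_le.1 h2).2
  show p.1 ^ 2 + p.2 ^ 2 ≤ r ^ 2
  linarith

def coords (x : EuclideanSpace ℝ (Fin 2)) : ℝ × ℝ := (x 0, x 1)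

lemma measurePreserving_coords : MeasurePreserving coords :=
  (volume_preserving_finTwoArrow ℝ).comp (PiLp.volume_preserving_ofLp (Fin 2))

lemma volume_coords_preimage {s : Set (ℝ × ℝ)} (hs : MeasurableSet s) :
    volume (coords ⁻¹' s) = volume s :=
  measurePreserving_coords.measure_preimage hs.nullMeasurableSet

lemma coords_preimage_disk {r : ℝ} (hr : 0 ≤ r) :
    coords ⁻¹' disk r = Metric.closedBall 0 r := by
  ext x
  rw [mem_preimage, Metric.mem_closedBall, dist_zero_right, EuclideanSpace.norm_eq,
    Fin.sum_univ_two, Real.norm_eq_abs, Real.norm_eq_abs, sq_abs, sq_abs, sqrt_le_left hr]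
  rfl

lemma volume_disk {r : ℝ} (hr : 0 ≤ r) : volume (disk r) = ENNReal.ofReal (π * r ^ 2) := by
  rw [← volume_coords_preimage (measurableSet_disk r), coords_preimage_disk hr,
    EuclideanSpace.volume_closedBall_fin_two, ← ENNReal.ofReal_pow hr, ← ENNReal.ofReal_mul (by positivity), mul_comm]

lemma volume_square_inter_disk {L r : ℝ} (hL : 0 < L) (hLr : L ≤ r) (hr : r ≤ √2 * L) :
    volume (square L ∩ disk r)
      = ENNReal.ofReal (π * r ^ 2 - 4 * (r ^ 2 * arccos (L / r) - L * √(r ^ 2 - L ^ 2))) := by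
  set I := ∫ x in L..r, 2 * √(r ^ 2 - x ^ 2) with hI_def
  have hI : 0 ≤ I := intervalIntegral.integral_nonneg hLr fun x _ => by positivity
  have h4 : 4 * ENNReal.ofReal I = ENNReal.ofReal (4 * I) := by
    rw [ENNReal.ofReal_mul (by norm_num), ENNReal.ofReal_ofNat]
  have hsplit := measure_inter_add_sdiff (μ := volume) (disk r) (measurableSet_square L)
  rw [volume_disk (hL.le.trans hLr), volume_disk_diff_square hL.le hLr hr, h4] at hsplit
  rw [inter_comm, ENNReal.eq_sub_of_add_eq ENNReal.ofReal_ne_top hsplit,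
    ← ENNReal.ofReal_sub _ (by positivity), hI_def,
    integral_two_mul_sqrt_sq_sub_sq (hL.trans_le hLr) (by linarith) hLr]

end SquareDisk

open SquareDisk

theorem square_disk_intersection_area_general
    {Ω : Type*} [MeasureSpace Ω]
    (L : ℝ) (hL : 0 < L) (z : ℝ) (hz : 0 ≤ z)
    (Z : Ω → EuclideanSpace ℝ (Fin 2))
    -- Z is uniformly distributed on the square [−L, L]²
    (hZ : Measure.map Z ℙ
      = (volume {x : EuclideanSpace ℝ (Fin 2) | ∀ i, |x i| ≤ L})⁻¹
          • volume.restrict {x : EuclideanSpace ℝ (Fin 2) | ∀ i, |x i| ≤ L}) :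
    (z ≤ L →
      volume {x : EuclideanSpace ℝ (Fin 2) | (∀ i, |x i| ≤ L) ∧ ‖x‖ ≤ z}
        = ENNReal.ofReal (π * z ^ 2)) ∧
    (L ≤ z → z ≤ Real.sqrt 2 * L →
      volume {x : EuclideanSpace ℝ (Fin 2) | (∀ i, |x i| ≤ L) ∧ ‖x‖ ≤ z}
        = ENNReal.ofReal
            (π * z ^ 2 - 4 * (z ^ 2 * Real.arccos (L / z)
              - L * Real.sqrt (z ^ 2 - L ^ 2)))) ∧
    (Real.sqrt 2 * L ≤ z →
      volume {x : EuclideanSpace ℝ (Fin 2) | (∀ i, |x i| ≤ L) ∧ ‖x‖ ≤ z}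
        = ENNReal.ofReal (4 * L ^ 2)) ∧
    (ℙ {ω | ‖Z ω‖ ≤ z}).toReal
      = (volume {x : EuclideanSpace ℝ (Fin 2) | (∀ i, |x i| ≤ L) ∧ ‖x‖ ≤ z}).toReal
          / (4 * L ^ 2) := by
  have hsquare : {x : EuclideanSpace ℝ (Fin 2) | ∀ i, |x i| ≤ L} = coords ⁻¹' square L := by
    ext x
    simp [coords, square, Fin.forall_fin_two]
  have hvol_square : volume {x : EuclideanSpace ℝ (Fin 2) | ∀ i, |x i| ≤ L}
      = ENNReal.ofReal (4 * L ^ 2) := by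
    rw [hsquare, volume_coords_preimage (measurableSet_square L), volume_square hL.le]
  have harea : volume {x : EuclideanSpace ℝ (Fin 2) | (∀ i, |x i| ≤ L) ∧ ‖x‖ ≤ z}
      = volume (square L ∩ disk z) := by
    rw [← volume_coords_preimage ((measurableSet_square L).inter (measurableSet_disk z)),
      preimage_inter, coords_preimage_disk hz, ← hsquare]
    congr 1
    ext x
    simp
  refine ⟨fun hzL => ?_, fun hLz hzL => ?_, fun hLz => ?_, ?_⟩
  · rw [harea, square_inter_disk_of_le hz hzL, volume_disk hz]
  · rw [harea, volume_square_inter_disk hL hLz hzL]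
  · rw [harea, square_inter_disk_of_sqrt_two_mul_le hL.le hLz, volume_square hL.le]
  · have hZ' : pdf.IsUniform Z {x | ∀ i, |x i| ≤ L} ℙ := hZ
    have hpos : volume {x : EuclideanSpace ℝ (Fin 2) | ∀ i, |x i| ≤ L} ≠ 0 := by
      rw [hvol_square]
      exact (ENNReal.ofReal_pos.2 (by positivity)).ne'
    change (ℙ (Z ⁻¹' {x | ‖x‖ ≤ z})).toReal = _
    rw [hZ'.measure_preimage hpos (hvol_square ▸ ENNReal.ofReal_ne_top)
        (measurableSet_le measurable_norm measurable_const),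
      ENNReal.toReal_div, hvol_square, ENNReal.toReal_ofReal (by positivity)]
    rfl

theorem square_disk_intersection_area
    {Ω : Type*} [MeasureSpace Ω] [IsProbabilityMeasure (ℙ : Measure Ω)]
    (L : ℝ) (hL : 0 < L) (z : ℝ) (hz : 0 ≤ z)
    (Z : Ω → EuclideanSpace ℝ (Fin 2)) (hZm : Measurable Z)
    -- Z is uniformly distributed on the square [−L, L]²
    (hZ : Measure.map Z ℙ
      = (volume {x : EuclideanSpace ℝ (Fin 2) | ∀ i, |x i| ≤ L})⁻¹
          • volume.restrict {x : EuclideanSpace ℝ (Fin 2) | ∀ i, |x i| ≤ L}) :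
    (z ≤ L →
      volume {x : EuclideanSpace ℝ (Fin 2) | (∀ i, |x i| ≤ L) ∧ ‖x‖ ≤ z}
        = ENNReal.ofReal (π * z ^ 2)) ∧
    (L ≤ z → z ≤ Real.sqrt 2 * L →
      volume {x : EuclideanSpace ℝ (Fin 2) | (∀ i, |x i| ≤ L) ∧ ‖x‖ ≤ z}
        = ENNReal.ofReal
            (π * z ^ 2 - 4 * (z ^ 2 * Real.arccos (L / z)
              - L * Real.sqrt (z ^ 2 - L ^ 2)))) ∧
    (Real.sqrt 2 * L ≤ z →
      volume {x : EuclideanSpace ℝ (Fin 2) | (∀ i, |x i| ≤ L) ∧ ‖x‖ ≤ z}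
        = ENNReal.ofReal (4 * L ^ 2)) ∧
    (ℙ {ω | ‖Z ω‖ ≤ z}).toReal
      = (volume {x : EuclideanSpace ℝ (Fin 2) | (∀ i, |x i| ≤ L) ∧ ‖x‖ ≤ z}).toReal
          / (4 * L ^ 2) :=
  square_disk_intersection_area_general L hL z hz Z hZ
end
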